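/- arXiv:2204.09403 — 11 statements merged into one kernel-verified Lean document; each statement's English description precedes it below -/
import Mathlib

section
/- For coprime positive integers q and e, m(q,e) ≤ ⌈e / ord_e(q)⌉, where ord_e(q) is the multiplicative order of q modulo e. -/
/-- `SumPowSet q e` is the set of positive integers `t` such that some sum of `t`
powers of `q` is divisible by `e`; its least element is `m(q,e)`. -/
def SumPowSet (q e : ℕ) : Set ℕ :=
  {t | 0 < t ∧ ∃ a : Fin t → ℕ, e ∣ ∑ i, q ^ a i}

/-- `OrdSet q e` is the set of positive integers `s` with `q ^ s ≡ 1 (mod e)`;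
its least element is the multiplicative order of `q` modulo `e`. -/
def OrdSet (q e : ℕ) : Set ℕ :=
  {s | 0 < s ∧ q ^ s ≡ 1 [MOD e]}

/-!
Put `A = {1, q, …, q ^ (n - 1)} ⊆ ZMod e`, a set of `n` elements. The sums of at most `k`
elements of `A` form `k • insert 0 A`. As long as `0` is not a nonempty sum of at most `k + 1`
of them, Scherk's theorem makes each further summand add at least `#A` new elements. Since
`ZMod e` has only `e` elements, `0` is therefore a sum of at most `⌈e / n⌉` powers of `q`.
-/

open Finset
open scoped Pointwise

namespace Finset

section AddMonoid

variable {M : Type*} [DecidableEq M]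

lemma mem_nsmul_insert_zero [AddMonoid M] {A : Finset M} {k : ℕ} {x : M}
    (hx : x ∈ k • insert 0 A) : ∃ t ≤ k, x ∈ t • A := by
  induction k generalizing x with
  | zero => exact ⟨0, le_rfl, hx⟩
  | succ k ih =>
    rw [succ_nsmul'] at hx
    obtain ⟨a, ha, y, hy, rfl⟩ := mem_add.1 hx
    obtain ⟨t, htk, hyt⟩ := ih hy
    obtain rfl | haA := mem_insert.1 ha
    · exact ⟨t, htk.trans k.le_succ, by rwa [zero_add]⟩
    · exact ⟨t + 1, by omega, by rw [succ_nsmul']; exact add_mem_add haA hyt⟩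

lemma exists_sum_eq_of_mem_nsmul_image [AddCommMonoid M] {ι : Type*} {f : ι → M} {s : Finset ι}
    {t : ℕ} {x : M} (hx : x ∈ t • s.image f) : ∃ a : Fin t → ι, ∑ i, f (a i) = x := by
  induction t generalizing x with
  | zero => exact ⟨Fin.elim0, by simpa [eq_comm] using hx⟩
  | succ t ih =>
    rw [succ_nsmul'] at hx
    obtain ⟨_, hi, y, hy, rfl⟩ := mem_add.1 hx
    obtain ⟨i, -, rfl⟩ := mem_image.1 hi
    obtain ⟨a, rfl⟩ := ih hy
    exact ⟨Fin.cons i a, by simp [Fin.sum_univ_succ]⟩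

end AddMonoid

section AddCommGroup

variable {G : Type*} [AddCommGroup G] [DecidableEq G] {A B : Finset G}

-- A nonzero `x ∈ A ∩ B` would put all its multiples, `0` among them, in `A ∖ {0}`.
lemma inter_subset_zero_of_vadd_subset [Finite G] (hu : ∀ a ∈ A, ∀ b ∈ B, a + b = 0 → a = 0)
    (hAB : ∀ a ∈ A, a ≠ 0 → a +ᵥ B ⊆ A) :
    A ∩ B ⊆ {0} := by
  intro x hx
  obtain ⟨hxA, hxB⟩ := mem_inter.1 hx
  by_contra hx0
  rw [mem_singleton] at hx0
  have hmul : ∀ j : ℕ, (j + 1) • x ∈ A ∧ (j + 1) • x ≠ 0 := by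
    intro j
    induction j with
    | zero => simpa using ⟨hxA, hx0⟩
    | succ j ih =>
      rw [succ_nsmul]
      exact ⟨hAB _ ih.1 ih.2 (vadd_mem_vadd_finset hxB),
        fun h => ih.2 (hu _ ih.1 x hxB h)⟩
  obtain ⟨j, hj⟩ := Nat.exists_eq_add_one.2 (addOrderOf_pos x)
  exact (hmul j).2 (hj ▸ addOrderOf_nsmul_eq_zero x)

/-- **Scherk's theorem**. -/
theorem card_add_card_le_card_add_add_one [Finite G] (hA : 0 ∈ A) (hB : 0 ∈ B)
    (hu : ∀ a ∈ A, ∀ b ∈ B, a + b = 0 → a = 0) : #A + #B ≤ #(A + B) + 1 := by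
  induction B using Finset.strongInduction generalizing A with
  | H B ih =>
  by_cases hstep : ∃ a ∈ A, a ≠ 0 ∧ ¬ a +ᵥ B ⊆ A
  · -- The Dyson `a`-transform shrinks `B`, keeps `#A + #B` and does not enlarge `A + B`.
    obtain ⟨a, haA, ha0, hnsub⟩ := hstep
    have hsub := addDysonETransform.subset a (A, B)
    have hcard := addDysonETransform.card a (A, B)
    simp only [addDysonETransform_fst, addDysonETransform_snd] at hsub hcard
    have hlt : B ∩ (-a +ᵥ A) ⊂ B := by
      refine ⟨inter_subset_left, fun hss => hnsub ?_⟩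
      simpa using subset_vadd_finset_iff.1 (hss.trans inter_subset_right)
    have hu' : ∀ x ∈ A ∪ (a +ᵥ B), ∀ y ∈ B ∩ (-a +ᵥ A), x + y = 0 → x = 0 := by
      intro x hx y hy hxy
      obtain ⟨hyB, hyA⟩ := mem_inter.1 hy
      obtain hxA | hxB := mem_union.1 hx
      · exact hu x hxA y hyB hxy
      obtain ⟨b, hb, rfl⟩ := mem_vadd_finset.1 hxB
      obtain ⟨c, hc, rfl⟩ := mem_vadd_finset.1 hyA
      have hc0 : c = 0 := hu c hc b hb (by rw [← hxy, vadd_eq_add, vadd_eq_add]; abel)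
      exact absurd (hu a haA _ hyB (by simp [hc0])) ha0
    have h0B' : 0 ∈ B ∩ (-a +ᵥ A) :=
      mem_inter.2 ⟨hB, mem_vadd_finset.2 ⟨a, haA, by simp⟩⟩
    have := ih _ hlt (mem_union_left _ hA) h0B' hu'
    have := card_le_card hsub
    omega
  · push Not at hstep
    have hinter := card_le_card (inter_subset_zero_of_vadd_subset hu hstep)
    have hunion : A ∪ B ⊆ A + B := union_subset (subset_add_left A hB) (subset_add_right B hA)
    have := card_le_card hunion
    have := card_union_add_card_inter A B
    simp only [card_singleton] at hinter
    omega

lemma card_nsmul_insert_zero [Finite G] {k : ℕ} (h : 0 ∉ A + k • insert 0 A) :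
    (k + 1) * #A + 1 ≤ #((k + 1) • insert 0 A) := by
  have hA0 : (0 : G) ∉ A := fun h0 =>
    h (mem_add.2 ⟨0, h0, 0, zero_mem_nsmul (mem_insert_self 0 A), add_zero 0⟩)
  induction k with
  | zero => simp [card_insert_of_notMem hA0]
  | succ k ih =>
    have hk : A + k • insert 0 A ⊆ A + (k + 1) • insert 0 A :=
      add_subset_add_left (nsmul_subset_nsmul_right (mem_insert_self 0 A) k.le_succ)
    have hu : ∀ a ∈ insert 0 A, ∀ b ∈ (k + 1) • insert 0 A, a + b = 0 → a = 0 := by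
      intro a ha b hb hab
      obtain rfl | haA := mem_insert.1 ha
      · rfl
      · exact absurd (mem_add.2 ⟨a, haA, b, hb, hab⟩) h
    have hscherk := card_add_card_le_card_add_add_one (mem_insert_self 0 A)
      (zero_mem_nsmul (mem_insert_self 0 A)) hu
    rw [← succ_nsmul', card_insert_of_notMem hA0] at hscherk
    have := ih (fun h0 => h (hk h0))
    linarith

theorem exists_zero_mem_nsmul_of_card_le [Fintype G] {k : ℕ}
    (h : Fintype.card G ≤ (k + 1) * #A) : ∃ t ≤ k, (0 : G) ∈ (t + 1) • A := by
  have h0 : (0 : G) ∈ A + k • insert 0 A := by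
    by_contra h0
    have := card_le_univ ((k + 1) • insert 0 A)
    have := card_nsmul_insert_zero h0
    omega
  obtain ⟨a, ha, y, hy, hay⟩ := mem_add.1 h0
  obtain ⟨t, htk, hyt⟩ := mem_nsmul_insert_zero hy
  exact ⟨t, htk, by rw [succ_nsmul', ← hay]; exact add_mem_add ha hyt⟩

end AddCommGroup

end Finset

lemma orderOf_natCast_eq_of_isLeast_ordSet {q e n : ℕ} (hn : IsLeast (OrdSet q e) n) :
    orderOf (q : ZMod e) = n := by
  have hpow {s : ℕ} : (q : ZMod e) ^ s = 1 ↔ q ^ s ≡ 1 [MOD e] := by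
    rw [← ZMod.natCast_eq_natCast_iff]; push_cast; rfl
  refine (orderOf_eq_iff hn.1.1).2 ⟨hpow.2 hn.1.2, fun s hsn hs h1 => ?_⟩
  exact absurd (hn.2 ⟨hs, hpow.1 h1⟩) (not_le.2 hsn)

theorem stmt_0_general (q e : ℕ) (he : 0 < e)
    (m n : ℕ) (hm : IsLeast (SumPowSet q e) m) (hn : IsLeast (OrdSet q e) n) :
    m ≤ (e + n - 1) / n := by
  have : NeZero e := ⟨he.ne'⟩
  have hn0 : 0 < n := hn.1.1
  obtain ⟨k, hk⟩ : ∃ k, (e + n - 1) / n = k + 1 :=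
    Nat.exists_eq_add_one.2 (Nat.div_pos (by omega) hn0)
  have hcard : e ≤ (k + 1) * n := by
    have := Nat.lt_div_mul_add (a := e + n - 1) hn0
    rw [hk] at this
    omega
  set A := (range n).image ((q : ZMod e) ^ ·)
  have hA : #A = n := by
    rw [card_image_of_injOn, card_range]
    rw [coe_range, ← orderOf_natCast_eq_of_isLeast_ordSet hn]
    exact pow_injOn_Iio_orderOf
  obtain ⟨t, htk, h0⟩ := exists_zero_mem_nsmul_of_card_le (A := A) (k := k) (by
    rwa [ZMod.card, hA])
  obtain ⟨a, ha⟩ := exists_sum_eq_of_mem_nsmul_image h0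
  have hdvd : e ∣ ∑ i, q ^ a i := by
    rw [← ZMod.natCast_eq_zero_iff]; push_cast; exact ha
  exact (hm.2 ⟨t.succ_pos, a, hdvd⟩).trans (by omega)

theorem stmt_0 (q e : ℕ) (hq : 0 < q) (he : 0 < e) (h : Nat.Coprime q e)
    (m n : ℕ) (hm : IsLeast (SumPowSet q e) m) (hn : IsLeast (OrdSet q e) n) :
    m ≤ (e + n - 1) / n :=
  stmt_0_general q e he m n hm hn
end

section
/- Let q,e be coprime positive integers with 1 < q < e, and set e_1 = gcd(e, q−1). If e < e_1^2 + 2·e_1, then m(q,e) = e_1. -/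
theorem stmt_3 (q e : ℕ) (h : Nat.Coprime q e) (h1 : 1 < q) (h2 : q < e)
    (hlt : e < (Nat.gcd e (q - 1)) ^ 2 + 2 * Nat.gcd e (q - 1))
    (m : ℕ) (hm : IsLeast (SumPowSet q e) m) :
    m = Nat.gcd e (q - 1) := by
  set e1 := Nat.gcd e (q - 1) with he1
  have he : 0 < e := by omega
  have he1pos : 0 < e1 := Nat.gcd_pos_of_pos_left _ he
  have hd_e : e1 ∣ e := Nat.gcd_dvd_left _ _
  have hd_q : e1 ∣ q - 1 := Nat.gcd_dvd_right _ _
  obtain ⟨e2, he2⟩ := hd_e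
  obtain ⟨u, hu⟩ := hd_q
  have he2pos : 0 < e2 := by
    rcases Nat.eq_zero_or_pos e2 with h0 | h0
    · rw [h0, mul_zero] at he2; omega
    · exact h0
  have hcop : Nat.Coprime u e2 := by
    have : e1 * Nat.gcd e2 u = e1 := by
      rw [← Nat.gcd_mul_left, ← he2, ← hu, he1]
    have hg1 : Nat.gcd e2 u = 1 :=
      Nat.eq_of_mul_eq_mul_left he1pos (by rw [mul_one]; exact this)
    exact Nat.coprime_comm.mp hg1
  have he2le : e2 ≤ e1 + 1 := by
    have : e1 * e2 < e1 * (e1 + 2) := by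
      rw [← he2]; nlinarith [hlt]
    have := Nat.lt_of_mul_lt_mul_left this
    omega
  haveI : NeZero e2 := ⟨he2pos.ne'⟩
  set j := (-(u : ZMod e2)⁻¹).val with hj
  have hjlt : j < e2 := ZMod.val_lt _
  have hjle : j ≤ e1 := by omega
  have key : e2 ∣ 1 + j * u := by
    have hinv : (u : ZMod e2) * (u : ZMod e2)⁻¹ = 1 := ZMod.coe_mul_inv_eq_one u hcop
    have : ((1 + j * u : ℕ) : ZMod e2) = 0 := by
      push_cast
      rw [hj, ZMod.natCast_val, ZMod.cast_id]
      rw [neg_mul, mul_comm]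
      rw [hinv]
      ring
    exact (ZMod.natCast_eq_zero_iff _ _).mp this
  have hdvd : e ∣ e1 + j * (q - 1) := by
    have : e1 + j * (q - 1) = e1 * (1 + j * u) := by rw [hu]; ring
    rw [this, he2]
    exact Nat.mul_dvd_mul_left e1 key
  -- membership of e1
  have hmem : e1 ∈ SumPowSet q e := by
    refine ⟨he1pos, fun i => if (i : ℕ) < j then 1 else 0, ?_⟩
    have hsum : ∑ i : Fin e1, q ^ (if (i : ℕ) < j then 1 else 0)
        = j * q + (e1 - j) := by
      have : ∀ i : Fin e1, q ^ (if (i : ℕ) < j then 1 else 0)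
          = if (i : ℕ) < j then q else 1 := by
        intro i; split <;> simp
      rw [Finset.sum_congr rfl (fun i _ => this i)]
      rw [Fin.sum_univ_eq_sum_range (fun i => if i < j then q else 1)]
      rw [Finset.sum_ite, Finset.sum_const, Finset.sum_const]
      have hf1 : (Finset.range e1).filter (fun i => i < j) = Finset.range j := by
        ext x; simp; omega
      have hf2 : ((Finset.range e1).filter (fun i => ¬ i < j)).card = e1 - j := by
        have : (Finset.range e1).filter (fun i => ¬ i < j) = Finset.Ico j e1 := by
          ext x; simp; omega
        rw [this, Nat.card_Ico]
      rw [hf1, hf2, Finset.card_range]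
      simp [mul_comm]
    rw [hsum]
    have : j * q + (e1 - j) = e1 + j * (q - 1) := by
      obtain ⟨r, hr⟩ : ∃ r, q = r + 1 := ⟨q - 1, by omega⟩
      subst hr
      simp only [Nat.add_sub_cancel]
      have : j * (r + 1) = j * r + j := by ring
      omega
    rw [this]
    exact hdvd
  -- lower bound: e1 ∣ m
  obtain ⟨hmpos, a, hadvd⟩ := hm.1
  have hq1 : (q : ZMod e1) = 1 := by
    have : ((q - 1 : ℕ) : ZMod e1) = 0 :=
      (ZMod.natCast_eq_zero_iff _ _).mpr ⟨u, hu⟩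
    have hq : q = (q - 1) + 1 := by omega
    rw [hq]; push_cast; rw [this]; ring
  have hsum0 : ((∑ i, q ^ a i : ℕ) : ZMod e1) = 0 :=
    (ZMod.natCast_eq_zero_iff _ _).mpr (dvd_trans ⟨e2, he2⟩ hadvd)
  have hmz : (m : ZMod e1) = 0 := by
    rw [← hsum0]
    push_cast
    rw [Finset.sum_congr rfl (fun i _ => by rw [hq1, one_pow])]
    simp
  have he1dm : e1 ∣ m := (ZMod.natCast_eq_zero_iff _ _).mp hmz
  have hle : m ≤ e1 := hm.2 hmem
  have hge : e1 ≤ m := Nat.le_of_dvd hmpos he1dm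
  omega
end

section
/- Let q,e be coprime positive integers. Then m(q,e) is divisible by gcd(e, q−1). -/
theorem stmt_4 (q e : ℕ) (hq : 0 < q) (he : 0 < e) (h : Nat.Coprime q e)
    (m : ℕ) (hm : IsLeast (SumPowSet q e) m) :
    Nat.gcd e (q - 1) ∣ m := by
  obtain ⟨⟨hmpos, a, hdiv⟩, -⟩ := hm
  set d := Nat.gcd e (q - 1) with hd
  have hdpos : 0 < d := Nat.gcd_pos_of_pos_left _ he
  haveI : NeZero d := ⟨hdpos.ne'⟩
  have hq1 : (q : ZMod d) = 1 := by
    have h0 : ((q - 1 : ℕ) : ZMod d) = 0 :=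
      (ZMod.natCast_eq_zero_iff _ _).mpr (Nat.gcd_dvd_right e (q - 1))
    have h1 : q - 1 + 1 = q := by omega
    calc (q : ZMod d) = ((q - 1 + 1 : ℕ) : ZMod d) := by rw [h1]
      _ = 1 := by push_cast [h0]; ring
  have hdsum : d ∣ ∑ i, q ^ a i := dvd_trans (Nat.gcd_dvd_left e (q - 1)) hdiv
  have h0 : ((∑ i, q ^ a i : ℕ) : ZMod d) = 0 :=
    (ZMod.natCast_eq_zero_iff _ _).mpr hdsum
  rw [Nat.cast_sum] at h0
  simp only [Nat.cast_pow, hq1, one_pow, Finset.sum_const, Finset.card_univ,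
    Fintype.card_fin, smul_eq_mul, mul_one, nsmul_eq_mul] at h0
  exact (ZMod.natCast_eq_zero_iff _ _).mp h0
end

section
/- Let q,e be coprime positive integers. Then m(q,e) = e if and only if q ≡ 1 (mod e). -/
theorem stmt_5 (q e : ℕ) (hq : 0 < q) (he : 0 < e) (h : Nat.Coprime q e)
    (m : ℕ) (hm : IsLeast (SumPowSet q e) m) :
    m = e ↔ q ≡ 1 [MOD e] := by
  constructor
  · intro hme
    by_contra hne
    -- e ≥ 2
    have he2 : 2 ≤ e := by
      rcases Nat.lt_or_ge e 2 with h1 | h1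
      · interval_cases e
        exact absurd Nat.modEq_one hne
      · exact h1
    set r := q % e with hr
    have hr1 : r ≠ 1 := by
      intro h1
      apply hne
      show q % e = 1 % e
      rw [Nat.one_mod_eq_one.mpr (by omega)]
      omega
    have hr0 : r ≠ 0 := by
      intro h0
      have : e ∣ q := Nat.dvd_of_mod_eq_zero h0
      have hg : Nat.gcd q e = e := Nat.gcd_eq_right this
      rw [h] at hg
      omega
    have hrlt : r < e := Nat.mod_lt _ he
    have hr2 : 2 ≤ r := by omega
    -- construct element t = (e - r) + 1
    have ht : (e - r) + 1 ∈ SumPowSet q e := by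
      refine ⟨Nat.succ_pos _, fun i => if i.val = 0 then 1 else 0, ?_⟩
      have : ∑ i : Fin (e - r + 1), q ^ (if i.val = 0 then 1 else 0)
          = q + (e - r) := by
        rw [Fin.sum_univ_succ]
        simp
      rw [this]
      have := Nat.div_add_mod q e
      refine ⟨q / e + 1, ?_⟩
      rw [Nat.mul_add, Nat.mul_one]
      omega
    have hle := hm.2 ht
    omega
  · intro h1
    have hle : m ≤ e := by
      apply hm.2
      exact ⟨he, fun _ => 0, by simp⟩
    have hmem := hm.1
    obtain ⟨hmpos, a, hdvd⟩ := hmem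
    have hq1 : (q : ZMod e) = 1 := by
      have := (ZMod.natCast_eq_natCast_iff q 1 e).mpr h1
      simpa using this
    have hsum : ((∑ i : Fin m, q ^ a i : ℕ) : ZMod e) = (m : ZMod e) := by
      push_cast
      simp [hq1]
    have hdvd' : (e : ℕ) ∣ m := by
      have h0 : ((∑ i : Fin m, q ^ a i : ℕ) : ZMod e) = 0 :=
        (ZMod.natCast_eq_zero_iff _ _).mpr hdvd
      rw [hsum] at h0
      exact (ZMod.natCast_eq_zero_iff _ _).mp h0
    have := Nat.le_of_dvd hmpos hdvd'
    omega
end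

section
/- Let q,e be coprime positive integers with e ≥ 2. Then m(q,e) = 2 if and only if either e = 2, or n := ord_e(q) is even and q^{n/2} ≡ −1 (mod e). -/
theorem stmt_7 (q e : ℕ) (hq : 0 < q) (he : 2 ≤ e) (h : Nat.Coprime q e)
    (m n : ℕ) (hm : IsLeast (SumPowSet q e) m) (hn : IsLeast (OrdSet q e) n) :
    m = 2 ↔ e = 2 ∨ (Even n ∧ e ∣ q ^ (n / 2) + 1) := by
  haveI : NeZero e := ⟨by omega⟩
  set u : (ZMod e)ˣ := ZMod.unitOfCoprime q h with hu
  have hcoe : (u : ZMod e) = (q : ℕ) := ZMod.coe_unitOfCoprime q h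
  have hupow : ∀ s : ℕ, u ^ s = 1 ↔ q ^ s ≡ 1 [MOD e] := by
    intro s
    rw [Units.ext_iff, Units.val_pow_eq_pow_val, hcoe, Units.val_one, ← Nat.cast_pow,
      ← Nat.cast_one, ZMod.natCast_eq_natCast_iff]
  -- n is the order of u
  have hord : n = orderOf u := by
    have h1 : orderOf u ∈ OrdSet q e :=
      ⟨orderOf_pos u, (hupow _).1 (pow_orderOf_eq_one u)⟩
    have h2 : orderOf u ∣ n := orderOf_dvd_of_pow_eq_one ((hupow n).2 hn.1.2)
    exact le_antisymm (hn.2 h1) (Nat.le_of_dvd hn.1.1 h2)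
  have hm1 : m ≠ 1 := by
    intro hm1
    subst hm1
    rcases hm.1 with ⟨-, a, hdvd⟩
    rw [Fin.sum_univ_one] at hdvd
    have : e = 1 := Nat.Coprime.eq_one_of_dvd ((h.pow_left _).symm) hdvd
    omega
  constructor
  · intro hm2
    subst hm2
    rcases hm.1 with ⟨-, a, hdvd⟩
    rw [Fin.sum_univ_two] at hdvd
    -- wlog: get k with e ∣ q^k + 1
    have hk : ∃ k, e ∣ q ^ k + 1 := by
      rcases le_total (a 1) (a 0) with hle | hle
      · refine ⟨a 0 - a 1, ?_⟩
        have : q ^ a 0 + q ^ a 1 = q ^ a 1 * (q ^ (a 0 - a 1) + 1) := by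
          rw [mul_add, mul_one, ← pow_add, Nat.add_sub_cancel' hle]
        rw [this] at hdvd
        exact (Nat.Coprime.dvd_of_dvd_mul_left ((h.pow_left _).symm) hdvd)
      · refine ⟨a 1 - a 0, ?_⟩
        have : q ^ a 0 + q ^ a 1 = q ^ a 0 * (q ^ (a 1 - a 0) + 1) := by
          rw [mul_add, mul_one, ← pow_add, Nat.add_sub_cancel' hle, add_comm]
        rw [this] at hdvd
        exact (Nat.Coprime.dvd_of_dvd_mul_left ((h.pow_left _).symm) hdvd)
    rcases hk with ⟨k, hk⟩
    by_cases he2 : e = 2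
    · exact Or.inl he2
    right
    haveI : Fact (2 < e) := ⟨by omega⟩
    have huk : u ^ k = -1 := by
      rw [Units.ext_iff]
      push_cast [hcoe]
      have : ((q ^ k + 1 : ℕ) : ZMod e) = 0 := (ZMod.natCast_eq_zero_iff _ _).2 hk
      push_cast at this
      linear_combination this
    have hukne : u ^ k ≠ 1 := by
      rw [huk]
      intro hcon
      have : (-1 : ZMod e) = 1 := by
        have := congrArg (Units.val) hcon
        simpa using this
      exact ZMod.neg_one_ne_one this
    have hndk : ¬ n ∣ k := by
      rw [hord]
      intro hdv
      exact hukne (orderOf_dvd_iff_pow_eq_one.1 hdv)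
    have hn2k : n ∣ 2 * k := by
      rw [hord]
      apply orderOf_dvd_of_pow_eq_one
      rw [two_mul, pow_add, huk]
      simp
    have heven : Even n := by
      by_contra hodd
      rw [Nat.not_even_iff_odd] at hodd
      exact hndk ((Nat.coprime_two_right.2 hodd).dvd_of_dvd_mul_left hn2k)
    refine ⟨heven, ?_⟩
    obtain ⟨hh, hhn⟩ := heven
    have hhn' : n = 2 * hh := by omega
    have hndiv : n / 2 = hh := by omega
    -- k = n*d + hh for some d
    obtain ⟨c, hc⟩ := hn2k
    have hkc : k = hh * c := by
      have h2 : 2 * k = 2 * (hh * c) := by rw [hc, hhn']; ring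
      omega
    have hcodd : Odd c := by
      rw [Nat.odd_iff]
      by_contra hce
      have : c % 2 = 0 := by omega
      obtain ⟨d, hd⟩ : 2 ∣ c := by omega
      exact hndk ⟨d, by rw [hkc, hd, hhn']; ring⟩
    obtain ⟨d, hd⟩ := hcodd
    have hkd : k = n * d + hh := by
      rw [hkc, hd, hhn']; ring
    have huh : u ^ hh = -1 := by
      have : u ^ k = (u ^ n) ^ d * u ^ hh := by
        rw [← pow_mul, ← pow_add, hkd]
      rw [huk, hord, pow_orderOf_eq_one, one_pow, one_mul] at this
      rw [← this]
    rw [hndiv]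
    rw [← ZMod.natCast_eq_zero_iff]
    have := congrArg (Units.val) huh
    rw [Units.val_pow_eq_pow_val, hcoe] at this
    push_cast
    simp only [Units.val_neg, Units.val_one] at this
    rw [this]
    ring
  · intro hcase
    have h2mem : 2 ∈ SumPowSet q e := by
      rcases hcase with he2 | ⟨hev, hdvd⟩
      · refine ⟨by norm_num, ![0, 0], ?_⟩
        rw [Fin.sum_univ_two]
        simp [he2]
      · exact ⟨by norm_num, ![n / 2, 0], by rw [Fin.sum_univ_two]; simpa using hdvd⟩
    have hle : m ≤ 2 := hm.2 h2mem
    have : 0 < m := hm.1.1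
    omega
end

section
/- Let q,e,r be positive integers with gcd(q,e) = 1 and 1 < q < e. If there exist positive integers a,b with gcd(a,b) = 1, b < a ≤ r, ab ≤ q, and e·b = a·(q−1), then m(q,e) = gcd(e, q−1) = e/a ≥ e/r. -/
theorem stmt_8 (q e r : ℕ) (hr : 0 < r) (h : Nat.Coprime q e) (h1 : 1 < q) (h2 : q < e)
    (a b : ℕ) (ha : 0 < a) (hb : 0 < b) (hab : Nat.Coprime a b) (hba : b < a)
    (har : a ≤ r) (habq : a * b ≤ q) (heq : e * b = a * (q - 1))
    (m : ℕ) (hm : IsLeast (SumPowSet q e) m) :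
    m = Nat.gcd e (q - 1) ∧ m * a = e ∧ e ≤ m * r := by
  -- b divides q - 1
  have hbdvd : b ∣ q - 1 := by
    have hd : b ∣ a * (q - 1) := ⟨e, by rw [← heq, mul_comm]⟩
    exact (Nat.Coprime.dvd_of_dvd_mul_left hab.symm hd)
  set c : ℕ := (q - 1) / b with hcdef
  have hc : b * c = q - 1 := Nat.mul_div_cancel' hbdvd
  have hq1 : 1 ≤ q - 1 := by omega
  have hc0 : 0 < c := by
    rcases Nat.eq_zero_or_pos c with h0 | h0
    · rw [h0, mul_zero] at hc; omega
    · exact h0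
  -- e = a * c
  have he : e = a * c := by
    have : e * b = (a * c) * b := by
      rw [heq, mul_assoc, mul_comm c b, hc]
    exact Nat.eq_of_mul_eq_mul_right hb this
  -- gcd e (q-1) = c
  have hgcd : Nat.gcd e (q - 1) = c := by
    rw [he, ← hc, mul_comm b c, mul_comm a c, Nat.gcd_mul_left,
      Nat.Coprime.gcd_eq_one hab, mul_one]
  -- find u < a with a ∣ u * b + 1
  haveI : NeZero a := ⟨ha.ne'⟩
  have hunit : IsUnit (b : ZMod a) := (ZMod.isUnit_iff_coprime b a).2 hab.symm
  set z : ZMod a := -(b : ZMod a)⁻¹ with hz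
  set u : ℕ := z.val with hu
  have hu_lt : u < a := ZMod.val_lt z
  have hadvd : a ∣ u * b + 1 := by
    rw [← ZMod.natCast_eq_zero_iff]
    push_cast
    rw [ZMod.natCast_rightInverse z, hz]
    rw [neg_mul, ZMod.inv_mul_of_unit _ hunit]
    ring
  -- u ≤ c
  have hac : a ≤ c + 1 := by
    by_contra hcc
    push_neg at hcc
    have h2c : c + 2 ≤ a := hcc
    have : (c + 2) * b ≤ a * b := Nat.mul_le_mul_right b h2c
    have hexp : (c + 2) * b = b * c + 2 * b := by ring
    omega
  have hu_le : u ≤ c := by omega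
  -- the sum construction: u copies of q and (c - u) copies of 1
  have hmemc : c ∈ SumPowSet q e := by
    refine ⟨hc0, fun i => if (i : ℕ) < u then 1 else 0, ?_⟩
    have hsum : (∑ i : Fin c, q ^ (if (i : ℕ) < u then 1 else 0)) = u * q + (c - u) := by
      rw [Fin.sum_univ_eq_sum_range (fun i => q ^ (if i < u then 1 else 0)) c]
      rw [Finset.range_eq_Ico, ← Finset.sum_Ico_consecutive _ (Nat.zero_le u) hu_le]
      have h1 : (∑ i ∈ Finset.Ico 0 u, q ^ (if i < u then 1 else 0)) = u * q := by
        have hcg : ∀ i ∈ Finset.Ico 0 u, q ^ (if i < u then 1 else 0) = q := by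
          intro i hi
          rw [Finset.mem_Ico] at hi
          rw [if_pos hi.2, pow_one]
        rw [Finset.sum_congr rfl hcg, Finset.sum_const, Nat.card_Ico, Nat.sub_zero,
          smul_eq_mul]
      have h2 : (∑ i ∈ Finset.Ico u c, q ^ (if i < u then 1 else 0)) = c - u := by
        have hcg : ∀ i ∈ Finset.Ico u c, q ^ (if i < u then 1 else 0) = 1 := by
          intro i hi
          rw [Finset.mem_Ico] at hi
          rw [if_neg (by omega), pow_zero]
        rw [Finset.sum_congr rfl hcg, Finset.sum_const, Nat.card_Ico, smul_eq_mul, mul_one]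
      rw [h1, h2]
    rw [hsum]
    have harith : u * q + (c - u) = c * (u * b + 1) := by
      have hq : q = b * c + 1 := by omega
      have e1 : u * q + (c - u) = u * b * c + u + (c - u) := by rw [hq]; ring_nf
      have e2 : u * b * c + u + (c - u) = u * b * c + c := by omega
      rw [e1, e2]; ring
    rw [harith, he]
    obtain ⟨k, hk⟩ := hadvd
    exact ⟨k, by rw [hk]; ring⟩
  -- lower bound: c ∣ m
  obtain ⟨⟨hm0, g, hg⟩, hleast⟩ := hm
  have hqmod : (q : ZMod (q - 1)) = 1 := by
    have : ((q - 1 : ℕ) + 1 : ℕ) = q := by omega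
    rw [← this]
    push_cast
    rw [ZMod.natCast_self]
    ring
  have hmodeq : (∑ i : Fin m, q ^ g i) ≡ m [MOD q - 1] := by
    rw [← ZMod.natCast_eq_natCast_iff]
    push_cast
    simp [hqmod]
  have hcq1 : c ∣ q - 1 := ⟨b, by rw [mul_comm]; omega⟩
  have hce : c ∣ e := ⟨a, by rw [he, mul_comm]⟩
  have hmod2 : (∑ i : Fin m, q ^ g i) ≡ 0 [MOD c] := by
    rw [Nat.modEq_zero_iff_dvd]
    exact dvd_trans hce hg
  have hcm : c ∣ m := by
    have := (hmodeq.of_dvd hcq1).symm.trans hmod2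
    exact (Nat.modEq_zero_iff_dvd).1 this
  have hmc : m = c := le_antisymm (hleast hmemc) (Nat.le_of_dvd hm0 hcm)
  refine ⟨by rw [hgcd, hmc], by rw [hmc, mul_comm, ← he], ?_⟩
  rw [he, hmc]
  calc a * c ≤ r * c := Nat.mul_le_mul_right c har
    _ = c * r := mul_comm r c
end

section
/- Let q > 1 be an odd integer and set e = 2(q−1). Then gcd(q,e) = 1, ord_e(q) = 2, and m(q,e) = q−1 = e/2 = ⌈e / ord_e(q)⌉. -/
/-!
Since `q ≡ 1 (mod q - 1)`, a sum of `t` powers of `q` is `≡ t (mod q - 1)`, so when `e = 2(q - 1)`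
divides it, `q - 1 ∣ t`; conversely `q + (q - 2) · q⁰ = e` uses exactly `q - 1` powers.
For odd `q = 2m + 1` we have `q² - 1 = 4m(m + 1) = 2(q - 1)(m + 1)`, while `1 < q < e`.
-/

lemma sum_pow_modEq_card {ι : Type*} (s : Finset ι) (a : ι → ℕ) {q n : ℕ}
    (hq : q ≡ 1 [MOD n]) : ∑ i ∈ s, q ^ a i ≡ s.card [MOD n] := by
  rw [Finset.card_eq_sum_ones]
  exact Nat.ModEq.sum fun i _ => by simpa using hq.pow (a i)

lemma dvd_of_mem_sumPowSet {q e n t : ℕ} (hq : q ≡ 1 [MOD n]) (hne : n ∣ e)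
    (ht : t ∈ SumPowSet q e) : n ∣ t := by
  obtain ⟨-, a, ha⟩ := ht
  have hsum : ∑ i, q ^ a i ≡ t [MOD n] := by
    simpa using sum_pow_modEq_card Finset.univ a hq
  exact Nat.modEq_zero_iff_dvd.mp (hsum.symm.trans (Nat.modEq_zero_iff_dvd.mpr (hne.trans ha)))

lemma succ_mem_sumPowSet (q k : ℕ) : k + 1 ∈ SumPowSet q (q + k) := by
  refine ⟨k.succ_pos, fun i => if i = 0 then 1 else 0, ?_⟩
  simp [Fin.sum_univ_succ, Fin.succ_ne_zero]

lemma isLeast_ordSet_two {q e : ℕ} (hsq : q ^ 2 ≡ 1 [MOD e]) (hq : ¬q ≡ 1 [MOD e]) :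
    IsLeast (OrdSet q e) 2 := by
  refine ⟨⟨two_pos, hsq⟩, fun s ⟨_, hqs⟩ => ?_⟩
  by_contra! hlt
  obtain rfl : s = 1 := by omega
  exact hq (by simpa using hqs)

lemma sq_modEq_one_of_odd {q : ℕ} (hq : Odd q) : q ^ 2 ≡ 1 [MOD 2 * (q - 1)] := by
  obtain ⟨m, rfl⟩ := hq
  rw [Nat.add_sub_cancel, Nat.modEq_iff_dvd]
  push_cast
  exact ⟨-(m + 1), by ring⟩

lemma not_modEq_one_of_lt {q n : ℕ} (h1 : 1 < q) (hn : q < n) : ¬q ≡ 1 [MOD n] := by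
  rw [Nat.ModEq, Nat.mod_eq_of_lt hn, Nat.mod_eq_of_lt (h1.trans hn)]
  exact h1.ne'

lemma coprime_two_mul_sub_one_of_odd {q : ℕ} (hq : Odd q) : Nat.Coprime q (2 * (q - 1)) :=
  Nat.Coprime.mul_right (Nat.coprime_two_right.mpr hq)
    ((Nat.coprime_self_sub_right hq.pos).mpr (Nat.coprime_one_right q))

theorem stmt_10 (q : ℕ) (hq : 1 < q) (hodd : Odd q) (e : ℕ) (he : e = 2 * (q - 1)) :
    Nat.Coprime q e ∧ IsLeast (OrdSet q e) 2 ∧ IsLeast (SumPowSet q e) (q - 1) ∧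
      q - 1 = e / 2 ∧ e / 2 = (e + 2 - 1) / 2 := by
  subst he
  have hq3 : 3 ≤ q := by obtain ⟨m, rfl⟩ := hodd; omega
  refine ⟨coprime_two_mul_sub_one_of_odd hodd,
    isLeast_ordSet_two (sq_modEq_one_of_odd hodd) (not_modEq_one_of_lt hq (by omega)),
    ⟨?_, fun t ht => ?_⟩, by omega, by omega⟩
  · have hmem := succ_mem_sumPowSet q (q - 2)
    rwa [show q - 2 + 1 = q - 1 by omega, show q + (q - 2) = 2 * (q - 1) by omega] at hmem
  · exact Nat.le_of_dvd ht.1 (dvd_of_mem_sumPowSet (Nat.modEq_sub hq.le)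
      (dvd_mul_left _ _) ht)
end

section
/- Let q,e be coprime positive integers with 1 < q < e and e_1 = gcd(e, q−1). If e_1 = q−1 and e < q^{k+1} − 1 for a positive integer k, then m(q,e) ≤ k·(q−1). -/
namespace Nat

theorem exists_sum_pow_eq_ofDigits (q : ℕ) :
    ∀ L : List ℕ, ∃ a : Fin L.sum → ℕ, ∑ i, q ^ a i = ofDigits q L
  | [] => ⟨Fin.elim0, by simp⟩
  | d :: T => by
    obtain ⟨a, ha⟩ := exists_sum_pow_eq_ofDigits q T
    rw [List.sum_cons]
    -- `d` copies of the exponent `0`, then the exponents for `T` shifted by one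
    refine ⟨Fin.append (fun _ => 0) (fun i => a i + 1), ?_⟩
    simp [Fin.sum_univ_add, ofDigits_cons, ← ha, pow_succ', Finset.mul_sum]

theorem modEq_digits_sum_sub_one {q : ℕ} (hq : 0 < q) (n : ℕ) :
    n ≡ (digits q n).sum [MOD q - 1] := by
  conv_lhs => rw [← ofDigits_digits q n]
  simpa [ofDigits_one] using ofDigits_modEq' q 1 (q - 1) (modEq_sub hq) (digits q n)

theorem sum_lt_length_mul_of_ofDigits_add_one_lt {q : ℕ} :
    ∀ {L : List ℕ}, (∀ d ∈ L, d < q) → ofDigits q L + 1 < q ^ L.length →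
      L.sum < L.length * (q - 1)
  | [], _, h => by simp at h
  | d :: T, hL, h => by
    have hd : d < q := hL d List.mem_cons_self
    have hT : ∀ x ∈ T, x < q := fun x hx => hL x (List.mem_cons_of_mem d hx)
    have hTsum : T.sum ≤ T.length * (q - 1) := by
      simpa [mul_comm] using
        List.sum_le_card_nsmul T (q - 1) fun x hx => le_sub_one_of_lt (hT x hx)
    rw [List.sum_cons, List.length_cons, add_one_mul]
    rcases (le_sub_one_of_lt hd).lt_or_eq with hd' | rfl
    · omega
    · rw [ofDigits_cons, List.length_cons, pow_succ'] at h
      have hTlt : ofDigits q T + 1 < q ^ T.length :=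
        Nat.lt_of_mul_lt_mul_left (a := q) (by rw [mul_add_one]; omega)
      have := sum_lt_length_mul_of_ofDigits_add_one_lt hT hTlt
      omega

theorem digits_sum_lt_of_add_one_lt_pow {q n j : ℕ} (hq : 1 < q) (hn : n + 1 < q ^ j) :
    (digits q n).sum < j * (q - 1) := by
  have hdig : ∀ d ∈ digits q n, d < q := fun d hd => digits_lt_base hq hd
  have hsum : (digits q n).sum ≤ (digits q n).length * (q - 1) := by
    simpa [mul_comm] using
      List.sum_le_card_nsmul _ (q - 1) fun d hd => le_sub_one_of_lt (hdig d hd)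
  rcases ((digits_length_le_iff hq n).2 (lt_of_succ_lt hn)).lt_or_eq with hlen | rfl
  · exact hsum.trans_lt (Nat.mul_lt_mul_of_pos_right hlen (by omega))
  · exact sum_lt_length_mul_of_ofDigits_add_one_lt hdig (by rwa [ofDigits_digits])

end Nat

theorem digits_sum_mem_sumPowSet (q : ℕ) {n : ℕ} (hn : 0 < n) :
    (Nat.digits q n).sum ∈ SumPowSet q n := by
  obtain ⟨a, ha⟩ := Nat.exists_sum_pow_eq_ofDigits q (Nat.digits q n)
  rw [Nat.ofDigits_digits] at ha
  have hne : (Finset.univ : Finset (Fin _)).Nonempty :=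
    Finset.nonempty_of_sum_ne_zero (ha ▸ hn.ne')
  exact ⟨Fin.pos_iff_nonempty.2 (Finset.univ_nonempty_iff.1 hne), a, ha.symm.dvd⟩

theorem stmt_12_general (q e k : ℕ) (h1 : 1 < q) (h2 : q < e)
    (he1 : Nat.gcd e (q - 1) = q - 1) (hlt : e < q ^ (k + 1) - 1)
    (m : ℕ) (hm : IsLeast (SumPowSet q e) m) :
    m ≤ k * (q - 1) := by
  set s := (Nat.digits q e).sum
  obtain ⟨c, hc⟩ : q - 1 ∣ s :=
    ((Nat.modEq_digits_sum_sub_one (by omega) e).dvd_iff dvd_rfl).1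
      (he1 ▸ Nat.gcd_dvd_left e (q - 1))
  have hs : s < (k + 1) * (q - 1) := Nat.digits_sum_lt_of_add_one_lt_pow h1 (by omega)
  have hck : c ≤ k := Nat.lt_succ_iff.1 <| Nat.lt_of_mul_lt_mul_left (a := q - 1) <| by
    rwa [← hc, mul_comm]
  calc m ≤ s := hm.2 (digits_sum_mem_sumPowSet q (by omega))
    _ = c * (q - 1) := by rw [hc, mul_comm]
    _ ≤ k * (q - 1) := Nat.mul_le_mul_right _ hck

theorem stmt_12 (q e k : ℕ) (h : Nat.Coprime q e) (h1 : 1 < q) (h2 : q < e)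
    (hk : 0 < k) (he1 : Nat.gcd e (q - 1) = q - 1) (hlt : e < q ^ (k + 1) - 1)
    (m : ℕ) (hm : IsLeast (SumPowSet q e) m) :
    m ≤ k * (q - 1) :=
  stmt_12_general q e k h1 h2 he1 hlt m hm
end

section
/- Let p be an odd prime, k ≥ 2, and let q be a positive integer not divisible by p. If p divides ord_{p^k}(q), then m(q, p^k) = m(q, p^{k−1}). -/
lemma pow_modEq_one_iff_intCast_dvd {q s e : ℕ} :
    q ^ s ≡ 1 [MOD e] ↔ (e : ℤ) ∣ (q : ℤ) ^ s - 1 := by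
  rw [Nat.ModEq.comm, Nat.modEq_iff_dvd]
  push_cast
  rfl

lemma Int.prime_dvd_sub_one_of_dvd_pow_sub_one {p : ℕ} (hp : p.Prime) {x : ℤ}
    (h : (p : ℤ) ∣ x ^ p - 1) : (p : ℤ) ∣ x - 1 := by
  have := Fact.mk hp
  rw [← ZMod.intCast_zmod_eq_zero_iff_dvd] at h ⊢
  push_cast at h ⊢
  rwa [ZMod.pow_card] at h

lemma Int.pow_pred_dvd_sub_one_of_pow_dvd_pow_sub_one {p : ℕ} (hp : p.Prime) (hodd : Odd p)
    {x : ℤ} {k : ℕ} (h : (p : ℤ) ^ k ∣ x ^ p - 1) : (p : ℤ) ^ (k - 1) ∣ x - 1 := by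
  rcases k with _ | k
  · simp
  have h1 : (p : ℤ) ∣ x - 1 :=
    Int.prime_dvd_sub_one_of_dvd_pow_sub_one hp (dvd_trans (dvd_pow_self _ k.succ_ne_zero) h)
  have hx : ¬ (p : ℤ) ∣ x := fun hx =>
    (Nat.prime_iff_prime_int.mp hp).not_dvd_one (by simpa using dvd_sub hx h1)
  have hlte := emultiplicity_pow_prime_sub_pow_prime (Nat.prime_iff_prime_int.mp hp) hodd
    (y := 1) h1 hx
  rw [one_pow] at hlte
  rw [pow_dvd_iff_le_emultiplicity, hlte, Nat.cast_add, Nat.cast_one] at h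
  rw [Nat.add_sub_cancel, pow_dvd_iff_le_emultiplicity]
  exact (ENat.add_le_add_iff_right ENat.one_ne_top).mp h

lemma Int.exists_natCast_dvd_add_mul {p : ℕ} (hp : p.Prime) {a : ℤ} (ha : ¬ (p : ℤ) ∣ a)
    (s : ℤ) : ∃ j : ℕ, (p : ℤ) ∣ s + a * j := by
  have := Fact.mk hp
  have ha' : (a : ZMod p) ≠ 0 := by rwa [Ne, ZMod.intCast_zmod_eq_zero_iff_dvd]
  refine ⟨(-(s : ZMod p) / a).val, ?_⟩
  rw [← ZMod.intCast_zmod_eq_zero_iff_dvd]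
  push_cast
  rw [ZMod.natCast_val, ZMod.cast_id, mul_div_cancel₀ _ ha', add_neg_cancel]

lemma sumPowSet_subset_of_dvd {q e f : ℕ} (h : e ∣ f) : SumPowSet q f ⊆ SumPowSet q e :=
  fun _ ⟨ht, a, ha⟩ => ⟨ht, a, h.trans ha⟩

lemma Int.exists_mul_dvd_sum_pow_of_dvd_sum_pow {ι : Type*} [Fintype ι] [DecidableEq ι]
    {p : ℕ} (hp : p.Prime) {N q c : ℤ} {d : ℕ} (hN : (p : ℤ) ∣ N) (hqd : q ^ d = 1 + N * c)
    (hc : ¬ (p : ℤ) ∣ c) (hq : ¬ (p : ℤ) ∣ q) (a : ι → ℕ) (i₀ : ι)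
    (ha : N ∣ ∑ i, q ^ a i) : ∃ b : ι → ℕ, N * p ∣ ∑ i, q ^ b i := by
  have hp' := Nat.prime_iff_prime_int.mp hp
  obtain ⟨s, hs⟩ := ha
  obtain ⟨j, v, hv⟩ := Int.exists_natCast_dvd_add_mul hp
    (a := q ^ a i₀ * c) (hp'.not_dvd_mul (mt hp'.dvd_of_dvd_pow hq) hc) s
  obtain ⟨r, hr⟩ := hN
  -- `(1 + N * c) ^ j ≡ 1 + j * N * c` modulo `N ^ 2`, and `N * p ∣ N ^ 2`
  obtain ⟨w, hw⟩ := sq_dvd_add_pow_sub_sub (N * c) 1 j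
  refine ⟨Function.update a i₀ (a i₀ + d * j), ?_⟩
  have hsum : ∑ i, q ^ Function.update a i₀ (a i₀ + d * j) i
      = ∑ i, q ^ a i + q ^ a i₀ * ((1 + N * c) ^ j - 1) := by
    rw [Finset.sum_eq_add_sum_sdiff_singleton_of_mem (Finset.mem_univ i₀) (fun i => q ^ a i)]
    simp only [Function.apply_update (fun _ e => q ^ e),
      Finset.sum_update_of_mem (Finset.mem_univ _), pow_add, pow_mul, hqd]
    ring
  refine ⟨v + q ^ a i₀ * c ^ 2 * r * w, ?_⟩
  rw [hsum, hs]
  simp only [one_pow, one_mul] at hw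
  linear_combination N * hv + q ^ a i₀ * hw + N * q ^ a i₀ * c ^ 2 * w * hr

lemma sumPowSet_subset_sumPowSet_mul {p N q d : ℕ} {c : ℤ} (hp : p.Prime) (hN : p ∣ N)
    (hqd : (q : ℤ) ^ d = 1 + N * c) (hc : ¬ (p : ℤ) ∣ c) (hq : ¬ p ∣ q) :
    SumPowSet q N ⊆ SumPowSet q (N * p) := by
  rintro t ⟨ht, a, ha⟩
  have ha' : (N : ℤ) ∣ ∑ i, (q : ℤ) ^ a i := by exact_mod_cast Int.natCast_dvd_natCast.mpr ha
  obtain ⟨b, hb⟩ := Int.exists_mul_dvd_sum_pow_of_dvd_sum_pow hp (Int.natCast_dvd_natCast.mpr hN)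
    hqd hc (Int.natCast_dvd_natCast.not.mpr hq) a ⟨0, ht⟩ ha'
  exact ⟨ht, b, by exact_mod_cast hb⟩

lemma exists_pow_eq_one_add_mul_of_isLeast_ordSet {p k q n : ℕ} (hp : p.Prime) (hodd : Odd p)
    (hk : k ≠ 0) (hn : IsLeast (OrdSet q (p ^ k)) n) (hpn : p ∣ n) :
    ∃ d : ℕ, ∃ c : ℤ, (q : ℤ) ^ d = 1 + p ^ (k - 1) * c ∧ ¬ (p : ℤ) ∣ c := by
  obtain ⟨d, rfl⟩ := hpn
  obtain ⟨hpos, hqn⟩ := hn.1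
  rw [pow_modEq_one_iff_intCast_dvd, pow_mul', Nat.cast_pow] at hqn
  obtain ⟨c, hc⟩ := Int.pow_pred_dvd_sub_one_of_pow_dvd_pow_sub_one hp hodd hqn
  have hd : 0 < d := Nat.pos_of_mul_pos_left hpos
  refine ⟨d, c, by linarith, fun ⟨e, he⟩ => ?_⟩
  have hd_mem : d ∈ OrdSet q (p ^ k) := by
    refine ⟨hd, pow_modEq_one_iff_intCast_dvd.mpr ⟨e, ?_⟩⟩
    rw [hc, he, ← mul_assoc, Nat.cast_pow, ← pow_succ, Nat.sub_add_cancel (by omega)]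
  have hle : p * d ≤ d := hn.2 hd_mem
  nlinarith [hp.two_le]

theorem stmt_15_general (p : ℕ) (hp : p.Prime) (hodd : Odd p) (k : ℕ) (hk : 2 ≤ k)
    (q : ℕ) (hpq : ¬ p ∣ q)
    (n : ℕ) (hn : IsLeast (OrdSet q (p ^ k)) n) (hpn : p ∣ n)
    (m m' : ℕ) (hm : IsLeast (SumPowSet q (p ^ k)) m)
    (hm' : IsLeast (SumPowSet q (p ^ (k - 1))) m') :
    m = m' := by
  obtain ⟨d, c, hqd, hc⟩ := exists_pow_eq_one_add_mul_of_isLeast_ordSet hp hodd (by omega) hn hpn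
  have hsets : SumPowSet q (p ^ k) = SumPowSet q (p ^ (k - 1)) := by
    refine (sumPowSet_subset_of_dvd (pow_dvd_pow p (Nat.sub_le k 1))).antisymm ?_
    rw [← pow_sub_one_mul (by omega : k ≠ 0) p]
    exact sumPowSet_subset_sumPowSet_mul hp (dvd_pow_self p (by omega)) (by exact_mod_cast hqd)
      hc hpq
  exact hm.unique (hsets ▸ hm')

theorem stmt_15 (p : ℕ) (hp : p.Prime) (hodd : Odd p) (k : ℕ) (hk : 2 ≤ k)
    (q : ℕ) (hq : 0 < q) (hpq : ¬ p ∣ q)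
    (n : ℕ) (hn : IsLeast (OrdSet q (p ^ k)) n) (hpn : p ∣ n)
    (m m' : ℕ) (hm : IsLeast (SumPowSet q (p ^ k)) m)
    (hm' : IsLeast (SumPowSet q (p ^ (k - 1))) m') :
    m = m' :=
  stmt_15_general p hp hodd k hk q hpq n hn hpn m m' hm hm'
end

section
/- Let p be a prime, q a positive integer not divisible by p, and j,k positive integers. Then m(q, p^{j+k}) ≤ m(q, p^j) · m(q, p^k), and m(q, p^j) ≤ m(q, p^{j+1}). -/
theorem stmt_16 (p : ℕ) (hp : p.Prime) (q : ℕ) (hq : 0 < q) (hpq : ¬ p ∣ q)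
    (j k : ℕ) (hj : 0 < j) (hk : 0 < k)
    (mjk mj mk mj1 : ℕ)
    (hmjk : IsLeast (SumPowSet q (p ^ (j + k))) mjk)
    (hmj : IsLeast (SumPowSet q (p ^ j)) mj)
    (hmk : IsLeast (SumPowSet q (p ^ k)) mk)
    (hmj1 : IsLeast (SumPowSet q (p ^ (j + 1))) mj1) :
    mjk ≤ mj * mk ∧ mj ≤ mj1 := by
  obtain ⟨⟨hmjpos, a, ha⟩, hmjle⟩ := hmj
  obtain ⟨⟨hmkpos, b, hb⟩, hmkle⟩ := hmk
  constructor
  · apply hmjk.2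
    refine ⟨Nat.mul_pos hmjpos hmkpos,
      fun i => a (finProdFinEquiv.symm i).1 + b (finProdFinEquiv.symm i).2, ?_⟩
    have : ∑ i : Fin (mj * mk),
        q ^ (a (finProdFinEquiv.symm i).1 + b (finProdFinEquiv.symm i).2)
        = (∑ x, q ^ a x) * (∑ y, q ^ b y) := by
      rw [← Fintype.sum_equiv finProdFinEquiv
        (fun z : Fin mj × Fin mk => q ^ (a z.1 + b z.2)) _ (by simp),
        Fintype.sum_prod_type, Finset.sum_mul]
      simp [pow_add, Finset.mul_sum]
    rw [this, pow_add]
    exact mul_dvd_mul ha hb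
  · apply hmjle
    obtain ⟨⟨hpos, c, hc⟩, _⟩ := hmj1
    exact ⟨hpos, c, dvd_trans (pow_dvd_pow p (Nat.le_succ j)) hc⟩
end

section
/- Let n > 1 be an integer. Then there are only finitely many positive integers e such that for some positive integer q, e divides Φ_n(q) and m(q,e) < n/(n − φ(n)). -/
open Polynomial in
lemma aux_denom (u : Polynomial ℚ) : ∃ (D : ℤ) (u' : Polynomial ℤ), D ≠ 0 ∧
    ∀ x : ℤ, ((u'.eval x : ℤ) : ℚ) = (D : ℚ) * u.eval (x : ℚ) := by
  induction u using Polynomial.induction_on' with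
  | add p q hp hq =>
    obtain ⟨D1, p', h1, hp'⟩ := hp
    obtain ⟨D2, q', h2, hq'⟩ := hq
    refine ⟨D1 * D2, C D2 * p' + C D1 * q', mul_ne_zero h1 h2, fun x => ?_⟩
    simp only [eval_add, eval_mul, eval_C, Int.cast_add, Int.cast_mul, hp' x, hq' x]
    ring
  | monomial k c =>
    refine ⟨(c.den : ℤ), C c.num * X ^ k, by exact_mod_cast c.den_nz, fun x => ?_⟩
    have hnum : ((c.num : ℚ)) = (c.den : ℚ) * c := (Rat.den_mul_eq_num c).symm
    simp only [eval_monomial, eval_mul, eval_C, eval_pow, eval_X, Int.cast_mul, Int.cast_pow,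
      hnum]
    push_cast
    ring

open Polynomial Complex Finset in
lemma aux_keyB (n : ℕ) (hn : 1 < n) (t : ℕ) (ht : 0 < t) (b : Fin t → Fin n)
    (hdvd : cyclotomic n ℚ ∣ ∑ i, (X : Polynomial ℚ) ^ (b i : ℕ)) :
    n ≤ (n - n.totient) * t := by
  have hn0 : n ≠ 0 := by omega
  have hnpos : 0 < n := by omega
  set ζ : ℂ := Complex.exp (2 * Real.pi * Complex.I / n) with hζdef
  have hζ : IsPrimitiveRoot ζ n := Complex.isPrimitiveRoot_exp n hn0
  have hζ1 : ‖ζ‖ = 1 := Complex.norm_eq_one_of_pow_eq_one hζ.pow_eq_one hn0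
  have habs : ∀ k : ℕ, ‖ζ ^ k‖ = 1 := fun k => by rw [norm_pow, hζ1, one_pow]
  -- mapped divisibility
  have hdvdC : cyclotomic n ℂ ∣ ∑ i, (X : Polynomial ℂ) ^ (b i : ℕ) := by
    have := Polynomial.map_dvd (algebraMap ℚ ℂ) hdvd
    simp only [Polynomial.map_cyclotomic, Polynomial.map_sum, Polynomial.map_pow,
      Polynomial.map_X] at this
    exact this
  have hroot : ∀ j : ℕ, Nat.Coprime j n → ∑ i, ζ ^ ((b i : ℕ) * j) = 0 := by
    intro j hj
    have hprim : IsPrimitiveRoot (ζ ^ j) n := hζ.pow_of_coprime j hj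
    have h1 : (cyclotomic n ℂ).IsRoot (ζ ^ j) := hprim.isRoot_cyclotomic hnpos
    obtain ⟨g, hg⟩ := hdvdC
    have h2 := congrArg (Polynomial.eval (ζ ^ j)) hg
    simp only [eval_mul, h1.eq_zero, zero_mul, eval_finset_sum, eval_pow, eval_X] at h2
    rw [← h2]
    apply Finset.sum_congr rfl
    intro i _
    rw [← pow_mul, mul_comm]
  set v : ℕ := (b ⟨0, ht⟩ : ℕ) with hv
  set w : ℕ := n - v with hwdef
  have hvlt : v < n := (b ⟨0, ht⟩).2
  have hw : 0 < w := by omega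
  have hvw : v + w = n := by omega
  -- per-i geometric sum
  have hgeom : ∀ i : Fin t, ∑ j ∈ Finset.range n, ζ ^ (((b i : ℕ) + w) * j)
      = if (b i : ℕ) = v then (n : ℂ) else 0 := by
    intro i
    have hbi : (b i : ℕ) < n := (b i).2
    have hrw : ∀ j, ζ ^ (((b i : ℕ) + w) * j) = (ζ ^ ((b i : ℕ) + w)) ^ j := fun j => by
      rw [pow_mul]
    by_cases hc : (b i : ℕ) = v
    · rw [if_pos hc]
      have hone : ∀ j ∈ Finset.range n, ζ ^ (((b i : ℕ) + w) * j) = 1 := by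
        intro j _
        rw [hc, hvw, pow_mul, hζ.pow_eq_one, one_pow]
      rw [Finset.sum_congr rfl hone, Finset.sum_const, Finset.card_range, nsmul_eq_mul, mul_one]
    · rw [if_neg hc]
      have hne : ζ ^ ((b i : ℕ) + w) ≠ 1 := by
        rw [Ne, hζ.pow_eq_one_iff_dvd]
        rintro ⟨k, hk⟩
        rcases Nat.lt_or_ge k 2 with h2 | h2
        · interval_cases k <;> omega
        · have h3 : 2 * n ≤ n * k := by nlinarith
          omega
      have hmul := geom_sum_mul (ζ ^ ((b i : ℕ) + w)) n
      rw [← pow_mul, mul_comm ((b i : ℕ) + w) n, pow_mul, hζ.pow_eq_one, one_pow,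
        sub_self] at hmul
      have := mul_eq_zero.mp hmul
      rcases this with h | h
      · rw [← h]
        apply Finset.sum_congr rfl
        intro j _
        rw [hrw]
      · exact absurd (sub_eq_zero.mp h) hne
  set c : ℕ := (Finset.univ.filter (fun i : Fin t => (b i : ℕ) = v)).card with hcdef
  have hc1 : 1 ≤ c := by
    apply Finset.card_pos.mpr
    exact ⟨⟨0, ht⟩, by simp [hv]⟩
  set S : ℂ := ∑ j ∈ Finset.range n, ∑ i : Fin t, ζ ^ (((b i : ℕ) + w) * j) with hSdef
  have hS1 : S = (c : ℂ) * n := by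
    rw [hSdef, Finset.sum_comm]
    rw [Finset.sum_congr rfl (fun i _ => hgeom i)]
    rw [Finset.sum_ite, Finset.sum_const, Finset.sum_const_zero, add_zero, nsmul_eq_mul]
  -- vanishing at coprime j
  have hvanish : ∀ j : ℕ, Nat.Coprime j n → ∑ i : Fin t, ζ ^ (((b i : ℕ) + w) * j) = 0 := by
    intro j hj
    have : ∀ i : Fin t, ζ ^ (((b i : ℕ) + w) * j) = ζ ^ ((b i : ℕ) * j) * ζ ^ (w * j) :=
      fun i => by rw [← pow_add, ← add_mul]
    rw [Finset.sum_congr rfl (fun i _ => this i), ← Finset.sum_mul, hroot j hj, zero_mul]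
  -- norm bound
  have hSle : ‖S‖ ≤ ((n - n.totient) * t : ℕ) := by
    have hfilter : S = ∑ j ∈ (Finset.range n).filter (fun j => ¬ Nat.Coprime j n),
        ∑ i : Fin t, ζ ^ (((b i : ℕ) + w) * j) := by
      rw [hSdef, Finset.sum_filter_of_ne]
      intro j _ hne
      intro hcop
      exact hne (hvanish j hcop)
    rw [hfilter]
    calc ‖∑ j ∈ (Finset.range n).filter (fun j => ¬ Nat.Coprime j n),
          ∑ i : Fin t, ζ ^ (((b i : ℕ) + w) * j)‖
        ≤ ∑ j ∈ (Finset.range n).filter (fun j => ¬ Nat.Coprime j n),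
          ‖∑ i : Fin t, ζ ^ (((b i : ℕ) + w) * j)‖ := norm_sum_le _ _
      _ ≤ ∑ j ∈ (Finset.range n).filter (fun j => ¬ Nat.Coprime j n), (t : ℝ) := by
          apply Finset.sum_le_sum
          intro j _
          calc ‖∑ i : Fin t, ζ ^ (((b i : ℕ) + w) * j)‖
              ≤ ∑ i : Fin t, ‖ζ ^ (((b i : ℕ) + w) * j)‖ := norm_sum_le _ _
            _ = (t : ℝ) := by simp [habs]
      _ = (((Finset.range n).filter (fun j => ¬ Nat.Coprime j n)).card : ℝ) * t := by
          rw [Finset.sum_const, nsmul_eq_mul]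
      _ ≤ ((n - n.totient) * t : ℕ) := by
          have hcard : ((Finset.range n).filter (fun j => ¬ Nat.Coprime j n)).card
              = n - n.totient := by
            have h1 := Finset.card_filter_add_card_filter_not
              (s := Finset.range n) (p := fun j => Nat.Coprime j n)
            have h2 : ((Finset.range n).filter (fun j => Nat.Coprime j n)).card
                = n.totient := by
              rw [Nat.totient]
              congr 1
              apply Finset.filter_congr
              intro x _
              simp [Nat.coprime_comm]
            rw [Finset.card_range] at h1
            omega
          rw [hcard]
          push_cast
          exact le_refl _
  -- conclude
  have hfin : (n : ℝ) ≤ ((n - n.totient) * t : ℕ) := by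
    have h1 : ‖S‖ = (c : ℝ) * n := by
      rw [hS1]
      rw [norm_mul]
      simp [Complex.norm_natCast]
    have h2 : (n : ℝ) ≤ (c : ℝ) * n := by
      have : (1 : ℝ) ≤ c := by exact_mod_cast hc1
      nlinarith [Nat.cast_nonneg (α := ℝ) n]
    calc (n:ℝ) ≤ (c:ℝ) * n := h2
      _ = ‖S‖ := h1.symm
      _ ≤ _ := hSle
  exact_mod_cast hfin
open Polynomial in
lemma aux_keyA (n : ℕ) (hn : 1 < n) (t : ℕ) (b : Fin t → Fin n) :
    ∃ B : ℕ, ∀ e q : ℤ, 0 < e → e ∣ (cyclotomic n ℤ).eval q →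
      e ∣ ∑ i, q ^ (b i : ℕ) →
      ¬ (cyclotomic n ℚ ∣ ∑ i, (X : Polynomial ℚ) ^ (b i : ℕ)) → e ≤ B := by
  by_cases hd : cyclotomic n ℚ ∣ ∑ i, (X : Polynomial ℚ) ^ (b i : ℕ)
  · exact ⟨0, fun e q _ _ _ hnd => absurd hd hnd⟩
  · have hirr := cyclotomic.irreducible_rat (n := n) (by omega)
    have hcop : IsCoprime (cyclotomic n ℚ) (∑ i, (X : Polynomial ℚ) ^ (b i : ℕ)) :=
      (hirr.coprime_iff_not_dvd).mpr hd
    obtain ⟨u, v, huv⟩ := hcop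
    obtain ⟨D1, u', hD1, hu⟩ := aux_denom u
    obtain ⟨D2, v', hD2, hv⟩ := aux_denom v
    refine ⟨(D1 * D2).natAbs, fun e q he h1 h2 _ => ?_⟩
    have heval := congrArg (Polynomial.eval (q : ℚ)) huv
    simp only [Polynomial.eval_add, Polynomial.eval_mul, Polynomial.eval_one] at heval
    have hc : (cyclotomic n ℚ).eval (q : ℚ) = (((cyclotomic n ℤ).eval q : ℤ) : ℚ) := by
      rw [← map_cyclotomic_int n ℚ]
      rw [show ((q : ℚ)) = (Int.castRingHom ℚ) q from rfl, Polynomial.eval_map,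
        Polynomial.eval₂_at_apply]
      simp
    have hf : (∑ i, (X : Polynomial ℚ) ^ (b i : ℕ)).eval (q : ℚ)
        = ((∑ i, q ^ (b i : ℕ) : ℤ) : ℚ) := by
      simp [Polynomial.eval_finset_sum]
    have key : u'.eval q * D2 * ((cyclotomic n ℤ).eval q)
        + v'.eval q * D1 * (∑ i, q ^ (b i : ℕ)) = D1 * D2 := by
      rw [hc, hf] at heval
      have hQ : ((u'.eval q * D2 * ((cyclotomic n ℤ).eval q)
          + v'.eval q * D1 * (∑ i, q ^ (b i : ℕ)) : ℤ) : ℚ) = ((D1 * D2 : ℤ) : ℚ) := by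
        push_cast [hu q, hv q]
        push_cast at heval
        linear_combination ((D1 : ℚ) * D2) * heval
      exact_mod_cast hQ
    have hdvd2 : e ∣ D1 * D2 := by
      rw [← key]
      exact dvd_add (Dvd.dvd.mul_left h1 _) (Dvd.dvd.mul_left h2 _)
    have habs : e ≤ |D1 * D2| := Int.le_of_dvd (abs_pos.mpr (mul_ne_zero hD1 hD2))
      ((dvd_abs _ _).mpr hdvd2)
    calc e ≤ |D1 * D2| := habs
      _ = ((D1 * D2).natAbs : ℤ) := (Int.abs_eq_natAbs _)

theorem stmt_17 (n : ℕ) (hn : 1 < n) :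
    {e : ℕ | 0 < e ∧ ∃ q m : ℕ, 0 < q ∧
      (e : ℤ) ∣ (Polynomial.cyclotomic n ℤ).eval (q : ℤ) ∧
      IsLeast (SumPowSet q e) m ∧
      (m : ℚ) < (n : ℚ) / ((n : ℚ) - (Nat.totient n : ℚ))}.Finite := by
  classical
  have hn0 : 0 < n := by omega
  have hφ : n.totient < n := Nat.totient_lt n hn
  let M : ℕ := Finset.univ.sup (fun idx : Σ t : Fin n, Fin (t : ℕ) → Fin n =>
    Classical.choose (aux_keyA n hn (idx.1 : ℕ) idx.2))
  apply Set.Finite.subset (Set.finite_Iic M)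
  rintro e ⟨he, q, m, hq, hdvd, ⟨⟨hm0, a, hsum⟩, -⟩, hlt⟩
  have hsub1 : (1 : ℚ) ≤ (n : ℚ) - n.totient := by
    have h0 : (n.totient : ℚ) + 1 ≤ n := by exact_mod_cast hφ
    linarith
  have hsubpos : (0 : ℚ) < (n : ℚ) - n.totient := by linarith
  have hmn : m < n := by
    have h2 : (m : ℚ) < n :=
      lt_of_lt_of_le hlt ((div_le_self (by positivity) hsub1))
    exact_mod_cast h2
  have hmul : (m : ℚ) * ((n : ℚ) - n.totient) < n := (lt_div_iff₀ hsubpos).mp hlt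
  set b : Fin m → Fin n := fun i => ⟨a i % n, Nat.mod_lt _ hn0⟩ with hbdef
  -- e divides q^n - 1
  have hqn : (e : ℤ) ∣ (q : ℤ) ^ n - 1 := by
    refine dvd_trans hdvd ?_
    obtain ⟨g, hg⟩ := Polynomial.cyclotomic.dvd_X_pow_sub_one n ℤ
    exact ⟨g.eval (q : ℤ), by
      have := congrArg (Polynomial.eval (q : ℤ)) hg
      simpa using this⟩
  -- e divides the reduced sum
  have hsum2 : (e : ℤ) ∣ ∑ i : Fin m, (q : ℤ) ^ ((b i : ℕ)) := by
    have hsumZ : (e : ℤ) ∣ ∑ i, (q : ℤ) ^ (a i) := by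
      have := Int.natCast_dvd_natCast.mpr hsum
      push_cast at this
      exact this
    have hdiff : (e : ℤ) ∣ ∑ i : Fin m, ((q : ℤ) ^ (a i) - (q : ℤ) ^ (a i % n)) := by
      apply Finset.dvd_sum
      intro i _
      have h1 : (q : ℤ) ^ (a i) - (q : ℤ) ^ (a i % n)
          = (q : ℤ) ^ (a i % n) * (((q : ℤ) ^ n) ^ (a i / n) - 1) := by
        rw [mul_sub, mul_one, ← pow_mul, ← pow_add]
        rw [Nat.mod_add_div]
      rw [h1]
      apply Dvd.dvd.mul_left
      have h2 : (q : ℤ) ^ n - 1 ∣ ((q : ℤ) ^ n) ^ (a i / n) - 1 := by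
        have := sub_dvd_pow_sub_pow ((q : ℤ) ^ n) 1 (a i / n)
        simpa using this
      exact hqn.trans h2
    have := dvd_sub hsumZ hdiff
    simpa [hbdef] using this
  by_cases hcase : Polynomial.cyclotomic n ℚ ∣
      ∑ i : Fin m, (Polynomial.X : Polynomial ℚ) ^ (b i : ℕ)
  · exfalso
    have hB := aux_keyB n hn m hm0 b hcase
    have hBQ : (n : ℚ) ≤ ((n : ℚ) - n.totient) * m := by
      have h1 : ((n : ℕ) : ℚ) ≤ (((n - n.totient) * m : ℕ) : ℚ) := by exact_mod_cast hB
      rw [Nat.cast_mul, Nat.cast_sub hφ.le] at h1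
      exact h1
    nlinarith [hmul]
  · simp only [Set.mem_Iic]
    set idx : Σ t : Fin n, Fin (t : ℕ) → Fin n := ⟨⟨m, hmn⟩, b⟩ with hidx
    have hspec := Classical.choose_spec (aux_keyA n hn ((idx.1 : ℕ)) idx.2)
    have hle : (e : ℤ) ≤ Classical.choose (aux_keyA n hn ((idx.1 : ℕ)) idx.2) :=
      hspec (e : ℤ) (q : ℤ) (by exact_mod_cast he) hdvd hsum2 hcase
    have h2 : e ≤ Classical.choose (aux_keyA n hn ((idx.1 : ℕ)) idx.2) := by
      exact_mod_cast hle
    exact h2.trans (Finset.le_sup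
      (f := fun idx : Σ t : Fin n, Fin (t : ℕ) → Fin n =>
        Classical.choose (aux_keyA n hn (idx.1 : ℕ) idx.2)) (Finset.mem_univ idx))
end
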